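/- Let A be a positive bounded self-adjoint operator on a right quaternionic Hilbert space. Then the S-spectrum of A is contained in the real interval [m(A), M(A)], where m(A) = inf_{‖φ‖=1}⟨Aφ,φ⟩ and M(A) = sup_{‖φ‖=1}⟨Aφ,φ⟩. -/

import Mathlib

noncomputable section

open MulOpposite

abbrev Quat := Quaternion ℝ

class RQH (V : Type*) [NormedAddCommGroup V] [Module Quatᵐᵒᵖ V] where
  inn : V → V → Quat
  conj_symm : ∀ φ ψ : V, star (inn φ ψ) = inn ψ φ
  add_right : ∀ φ ψ ω : V, inn φ (ψ + ω) = inn φ ψ + inn φ ω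
  smul_right : ∀ (φ ψ : V) (q : Quat), inn φ (op q • ψ) = inn φ ψ * q
  norm_sq : ∀ φ : V, inn φ φ = ((‖φ‖ ^ 2 : ℝ) : Quat)

open RQH

variable {V : Type*} [NormedAddCommGroup V] [Module Quatᵐᵒᵖ V] [CompleteSpace V] [RQH V]

def IsBddRL (A : V → V) : Prop :=
  (∀ x y : V, A (x + y) = A x + A y) ∧
  (∀ (q : Quatᵐᵒᵖ) (x : V), A (q • x) = q • A x) ∧
  (∃ C : ℝ, ∀ x : V, ‖A x‖ ≤ C * ‖x‖)

def IsSA (A : V → V) : Prop := ∀ φ ψ : V, inn (A φ) ψ = inn φ (A ψ)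

def IsPos (A : V → V) : Prop := ∀ φ : V, ∃ r : ℝ, 0 ≤ r ∧ inn (A φ) φ = (r : Quat)

def opN (A : V → V) : ℝ := sSup { r : ℝ | ∃ φ : V, ‖φ‖ = 1 ∧ r = ‖A φ‖ }

def mA (A : V → V) : ℝ := sInf { r : ℝ | ∃ φ : V, ‖φ‖ = 1 ∧ r = (inn (A φ) φ).re }

def MA (A : V → V) : ℝ := sSup { r : ℝ | ∃ φ : V, ‖φ‖ = 1 ∧ r = (inn (A φ) φ).re }

def Rq (A : V → V) (l : Quat) (ψ : V) : V :=
  A (A ψ) - op ((2 * l.re : ℝ) : Quat) • A ψ + op ((‖l‖ ^ 2 : ℝ) : Quat) • ψ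

def SInv (T : V → V) : Prop :=
  ∃ B : V → V, IsBddRL B ∧ (∀ x, T (B x) = x) ∧ (∀ x, B (T x) = x)

def sspec (A : V → V) : Set Quat := { l | ¬ SInv (Rq A l) }

/-!
The real part of `inn` is a real inner product on `V`, and in it self-adjointness gives
`⟪R_λ(A) φ, φ⟫ = ‖A φ - Re(λ) φ‖² + (|λ|² - Re(λ)²) ‖φ‖²`. For non-real `λ` the second term makes
`R_λ(A)` coercive. For real `λ` outside `[m(A), M(A)]`, the bounds `m(A) ‖φ‖² ≤ ⟪A φ, φ⟫ ≤ M(A) ‖φ‖²`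
and Cauchy–Schwarz give `‖A φ - λ φ‖ ≥ δ ‖φ‖` with `δ > 0`, so the first term does. A coercive
operator is invertible by Lax–Milgram, and its inverse is again right `ℍ`-linear.
-/

open scoped InnerProductSpace

namespace Quaternion

theorem re_sq_le_sq_norm (l : Quat) : l.re ^ 2 ≤ ‖l‖ ^ 2 := by
  rw [sq ‖l‖, ← normSq_eq_norm_mul_self, normSq_def']
  nlinarith [sq_nonneg l.imI, sq_nonneg l.imJ, sq_nonneg l.imK]

theorem re_sq_lt_sq_norm {l : Quat} (hl : l ≠ (l.re : Quat)) : l.re ^ 2 < ‖l‖ ^ 2 := by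
  refine (re_sq_le_sq_norm l).lt_of_ne fun h => hl ?_
  rw [sq ‖l‖, ← normSq_eq_norm_mul_self, normSq_def'] at h
  have hI : l.imI = 0 := by nlinarith [sq_nonneg l.imI, sq_nonneg l.imJ, sq_nonneg l.imK]
  have hJ : l.imJ = 0 := by nlinarith [sq_nonneg l.imI, sq_nonneg l.imJ, sq_nonneg l.imK]
  have hK : l.imK = 0 := by nlinarith [sq_nonneg l.imI, sq_nonneg l.imJ, sq_nonneg l.imK]
  ext <;> simp [hI, hJ, hK]

end Quaternion

theorem mul_norm_le_norm_of_mul_sq_norm_le_inner {F : Type*} [NormedAddCommGroup F]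
    [InnerProductSpace ℝ F] {c : ℝ} {x y : F} (h : c * ‖x‖ ^ 2 ≤ ⟪y, x⟫_ℝ) : c * ‖x‖ ≤ ‖y‖ := by
  rcases eq_or_ne x 0 with rfl | hx
  · simp
  · have hCS := real_inner_le_norm y x
    exact le_of_mul_le_mul_right (by nlinarith) (norm_pos_iff.2 hx)

section RealStructure

variable {E : Type*} [NormedAddCommGroup E] [Module Quatᵐᵒᵖ E]

instance (priority := 100) moduleRealOfQuatOp : Module ℝ E :=
  Module.compHom E (algebraMap ℝ Quatᵐᵒᵖ)

theorem real_smul_eq_op_coe_smul (r : ℝ) (x : E) : r • x = op (r : Quat) • x := rfl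

instance : SMulCommClass ℝ Quatᵐᵒᵖ E where
  smul_comm r q x := by
    rw [real_smul_eq_op_coe_smul, real_smul_eq_op_coe_smul, smul_smul, smul_smul]
    exact congrArg (· • x) (Algebra.commutes r q)

variable [RQH E]

theorem inn_add_left (φ ψ ω : E) : inn (φ + ψ) ω = inn φ ω + inn ψ ω := by
  rw [← conj_symm, add_right, star_add, conj_symm, conj_symm]

theorem inn_op_smul_left (q : Quat) (φ ψ : E) : inn (op q • φ) ψ = star q * inn φ ψ := by
  rw [← conj_symm, smul_right, star_mul, conj_symm]

theorem re_inn_self (φ : E) : (inn φ φ).re = ‖φ‖ ^ 2 := by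
  rw [norm_sq, Quaternion.re_coe]

theorem norm_op_coe_smul (r : ℝ) (x : E) : ‖op (r : Quat) • x‖ = |r| * ‖x‖ := by
  have h : ‖op (r : Quat) • x‖ ^ 2 = (|r| * ‖x‖) ^ 2 := by
    rw [← re_inn_self, smul_right, inn_op_smul_left, norm_sq, Quaternion.star_coe, mul_pow, sq_abs]
    norm_cast
    ring
  exact (pow_left_inj₀ (norm_nonneg _) (by positivity) two_ne_zero).1 h

instance (priority := 100) RQH.innerProductSpaceReal : InnerProductSpace ℝ E where
  norm_smul_le r x := (norm_op_coe_smul r x).le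
  inner x y := (inn x y).re
  norm_sq_eq_re_inner x := (re_inn_self x).symm
  conj_inner_symm x y := by simp [← conj_symm x y]
  add_left x y z := by simp [inn_add_left]
  smul_left x y r := by simp [real_smul_eq_op_coe_smul, inn_op_smul_left]

theorem real_inner_eq_re_inn (x y : E) : ⟪x, y⟫_ℝ = (inn x y).re := rfl

end RealStructure

section Operators

variable {E : Type*} [NormedAddCommGroup E] [Module Quatᵐᵒᵖ E] [RQH E] {A : E → E}

def IsBddRL.toCLM (hA : IsBddRL A) : E →L[ℝ] E :=
  LinearMap.mkContinuousOfExistsBound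
    { toFun := A
      map_add' := hA.1
      map_smul' := fun r x => hA.2.1 (algebraMap ℝ Quatᵐᵒᵖ r) x }
    hA.2.2

@[simp]
theorem IsBddRL.coe_toCLM (hA : IsBddRL A) : ⇑hA.toCLM = A := rfl

theorem isBddRL_of_continuousLinearMap (T : E →L[ℝ] E)
    (hT : ∀ (q : Quatᵐᵒᵖ) (x : E), T (q • x) = q • T x) : IsBddRL T :=
  ⟨map_add T, hT, ‖T‖, T.le_opNorm⟩

theorem rq_apply (l : Quat) (ψ : E) :
    Rq A l ψ = A (A ψ) - (2 * l.re) • A ψ + (‖l‖ ^ 2) • ψ := rfl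

theorem isBddRL_rq (hA : IsBddRL A) (l : Quat) : IsBddRL (Rq A l) := by
  set T := hA.toCLM
  have hRq : Rq A l = ⇑(T.comp T - (2 * l.re) • T + (‖l‖ ^ 2) • ContinuousLinearMap.id ℝ E) :=
    rfl
  rw [hRq]
  refine isBddRL_of_continuousLinearMap _ fun q x => ?_
  simp only [← hRq, rq_apply, hA.2.1, smul_comm _ q, smul_sub, smul_add]

theorem sInv_of_continuousLinearEquiv {Q : E → E}
    (hQ : ∀ (q : Quatᵐᵒᵖ) (x : E), Q (q • x) = q • Q x) (e : E ≃L[ℝ] E) (he : ⇑e = Q) :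
    SInv Q := by
  subst he
  refine ⟨e.symm, isBddRL_of_continuousLinearMap (e.symm : E →L[ℝ] E) fun q x => ?_,
    e.apply_symm_apply, e.symm_apply_apply⟩
  apply e.injective
  simp [hQ]

theorem sInv_of_coercive [CompleteSpace E] {Q : E → E} (hQ : IsBddRL Q) {c : ℝ} (hc : 0 < c)
    (hcoer : ∀ φ, c * ‖φ‖ ^ 2 ≤ ⟪Q φ, φ⟫_ℝ) : SInv Q := by
  have hB : IsCoercive ((innerSL ℝ).comp hQ.toCLM) :=
    ⟨c, hc, fun u => by simpa [sq, mul_assoc] using hcoer u⟩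
  refine sInv_of_continuousLinearEquiv hQ.2.1 hB.continuousLinearEquivOfBilin
    (funext fun v => ext_inner_right ℝ fun w => ?_)
  simp [hB.continuousLinearEquivOfBilin_apply]

def numRange (A : E → E) : Set ℝ := { r | ∃ φ : E, ‖φ‖ = 1 ∧ r = (inn (A φ) φ).re }

theorem IsBddRL.numRange_subset_Icc (hA : IsBddRL A) : ∃ C, numRange A ⊆ Set.Icc (-C) C := by
  refine ⟨‖hA.toCLM‖, ?_⟩
  rintro _ ⟨φ, hφ, rfl⟩
  have h := (abs_real_inner_le_norm (A φ) φ).trans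
    (mul_le_mul_of_nonneg_right (hA.toCLM.le_opNorm φ) (norm_nonneg φ))
  rw [hφ, mul_one, mul_one] at h
  exact abs_le.1 h

theorem IsBddRL.div_sq_norm_mem_numRange (hA : IsBddRL A) {φ : E} (hφ : φ ≠ 0) :
    ⟪A φ, φ⟫_ℝ / ‖φ‖ ^ 2 ∈ numRange A := by
  refine ⟨‖φ‖⁻¹ • φ, norm_smul_inv_norm hφ, ?_⟩
  rw [← real_inner_eq_re_inn, ← hA.coe_toCLM, map_smul, real_inner_smul_left,
    real_inner_smul_right]
  field_simp

theorem IsBddRL.mA_mul_sq_norm_le (hA : IsBddRL A) (φ : E) : mA A * ‖φ‖ ^ 2 ≤ ⟪A φ, φ⟫_ℝ := by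
  rcases eq_or_ne φ 0 with rfl | hφ
  · simp
  obtain ⟨C, hC⟩ := hA.numRange_subset_Icc
  exact (le_div_iff₀ (by positivity)).1
    (csInf_le (bddBelow_Icc.mono hC) (hA.div_sq_norm_mem_numRange hφ))

theorem IsBddRL.le_MA_mul_sq_norm (hA : IsBddRL A) (φ : E) : ⟪A φ, φ⟫_ℝ ≤ MA A * ‖φ‖ ^ 2 := by
  rcases eq_or_ne φ 0 with rfl | hφ
  · simp
  obtain ⟨C, hC⟩ := hA.numRange_subset_Icc
  exact (div_le_iff₀ (by positivity)).1
    (le_csSup (bddAbove_Icc.mono hC) (hA.div_sq_norm_mem_numRange hφ))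

theorem IsBddRL.exists_pos_mul_norm_le_norm_sub_smul (hA : IsBddRL A) {a : ℝ}
    (ha : a ∉ Set.Icc (mA A) (MA A)) : ∃ δ > 0, ∀ φ : E, δ * ‖φ‖ ≤ ‖A φ - a • φ‖ := by
  rcases not_and_or.1 ha with ha | ha <;> rw [not_le] at ha
  · refine ⟨mA A - a, by linarith, fun φ => mul_norm_le_norm_of_mul_sq_norm_le_inner ?_⟩
    rw [inner_sub_left, real_inner_smul_left, real_inner_self_eq_norm_sq]
    linarith [hA.mA_mul_sq_norm_le φ]
  · refine ⟨a - MA A, by linarith, fun φ => norm_sub_rev (A φ) (a • φ) ▸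
      mul_norm_le_norm_of_mul_sq_norm_le_inner ?_⟩
    rw [inner_sub_left, real_inner_smul_left, real_inner_self_eq_norm_sq]
    linarith [hA.le_MA_mul_sq_norm φ]

theorem inner_rq_self (hsa : IsSA A) (l : Quat) (φ : E) :
    ⟪Rq A l φ, φ⟫_ℝ = ‖A φ - l.re • φ‖ ^ 2 + (‖l‖ ^ 2 - l.re ^ 2) * ‖φ‖ ^ 2 := by
  have hAA : ⟪A (A φ), φ⟫_ℝ = ‖A φ‖ ^ 2 := by
    rw [real_inner_eq_re_inn, hsa, ← real_inner_eq_re_inn, real_inner_self_eq_norm_sq]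
  rw [rq_apply, inner_add_left, inner_sub_left, real_inner_smul_left, real_inner_smul_left, hAA,
    real_inner_self_eq_norm_sq, norm_sub_sq_real, real_inner_smul_right, norm_smul, mul_pow,
    Real.norm_eq_abs, sq_abs]
  ring

theorem exists_coercive_rq (hA : IsBddRL A) (hsa : IsSA A) {l : Quat}
    (hl : l ∉ (fun r : ℝ => (r : Quat)) '' Set.Icc (mA A) (MA A)) :
    ∃ c > 0, ∀ φ : E, c * ‖φ‖ ^ 2 ≤ ⟪Rq A l φ, φ⟫_ℝ := by
  by_cases hre : l = (l.re : Quat)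
  · obtain ⟨δ, hδ, hgap⟩ :=
      hA.exists_pos_mul_norm_le_norm_sub_smul (a := l.re) fun h => hl ⟨l.re, h, hre.symm⟩
    refine ⟨δ ^ 2, by positivity, fun φ => ?_⟩
    have hsq := pow_le_pow_left₀ (by positivity) (hgap φ) 2
    rw [mul_pow] at hsq
    rw [inner_rq_self hsa]
    linarith [mul_nonneg (sub_nonneg.2 (Quaternion.re_sq_le_sq_norm l)) (sq_nonneg ‖φ‖)]
  · refine ⟨‖l‖ ^ 2 - l.re ^ 2, sub_pos.2 (Quaternion.re_sq_lt_sq_norm hre), fun φ => ?_⟩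
    rw [inner_rq_self hsa]
    exact le_add_of_nonneg_left (sq_nonneg _)

end Operators

theorem stmt10_general (A : V → V) (hA : IsBddRL A) (hsa : IsSA A) :
    sspec A ⊆ (fun r : ℝ => (r : Quat)) '' Set.Icc (mA A) (MA A) := by
  intro l hl
  by_contra hnot
  obtain ⟨c, hc, hcoer⟩ := exists_coercive_rq hA hsa hnot
  exact hl (sInv_of_coercive (isBddRL_rq hA l) hc hcoer)

/-- The S-spectrum of a positive bounded self-adjoint operator lies in [m(A), M(A)]. -/
theorem stmt10 [Nontrivial V] (A : V → V) (hA : IsBddRL A) (hsa : IsSA A) (hpos : IsPos A) :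
    sspec A ⊆ (fun r : ℝ => (r : Quat)) '' Set.Icc (mA A) (MA A) :=
  stmt10_general A hA hsa
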